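/- In situation ii), let β ∈ (D,1/D) be an atom of ν with ρ({β}) = 0. Then almost surely in ω, (ξ, Y), and X, both limits lim_{n→∞} (1/n) Σ_{k=1}^{n} 1{χ(k) = β} and lim_{n→∞} (1/n) Σ_{k=1}^{n} 1{χ(k) = β and χ(k+1) = β} exist and equal p·ν({β}) and p²·ν({β})², respectively; in particular the conditioned empirical frequency h(β|β), defined as the ratio of the second limit to the first, equals p·ν({β}), which coincides with the unconditioned frequency h(β) = p·ν({β}). -/

import Mathlib

open MeasureTheory ProbabilityTheory Filter

open Topology
open scoped ENNReal
set_option linter.unusedSectionVars false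

noncomputable section

open Classical in
/-- Indicator of a proposition, as a real number. -/
def ind (P : Prop) : ℝ := if P then 1 else 0

/-- Bernoulli(p) law on ℝ (mass 1-p at 0, mass p at 1). -/
def bern (p : ℝ) : Measure ℝ :=
  ENNReal.ofReal (1 - p) • Measure.dirac 0 + ENNReal.ofReal p • Measure.dirac 1

/-- Uniform law on [0,1]. -/
def unif : Measure ℝ := volume.restrict (Set.Icc (0:ℝ) 1)

/-- The combined family of the basic random variables (environment, uniform drivers of the
walk, Bernoulli error indicators, error values), used to state their joint independence. -/
def family {Ω : Type} (env : Ω → ℤ → ℝ) (U ξ Y : Ω → ℕ → ℝ) :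
    (ℤ ⊕ (ℕ ⊕ (ℕ ⊕ ℕ))) → Ω → ℝ
  | Sum.inl z => fun w => env w z
  | Sum.inr (Sum.inl n) => fun w => U w n
  | Sum.inr (Sum.inr (Sum.inl n)) => fun w => ξ w n
  | Sum.inr (Sum.inr (Sum.inr n)) => fun w => Y w n

/-- Situation ii): the walk driven by the uniform variables `U` among the conductances `env`
(`env z` is the conductance of the edge `(z, z+1)`); it jumps from `z` to `z+1` with
probability `env z / (env (z-1) + env z)`. -/
def walkII (env : ℤ → ℝ) (U : ℕ → ℝ) : ℕ → ℤ
  | 0 => 0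
  | n + 1 => walkII env U n +
      if U n < env (walkII env U n) / (env (walkII env U n - 1) + env (walkII env U n))
      then 1 else -1

/-- Situation ii): the corrupted observations; `obsII env U ξ Y n` is the observation
χ(n+1) = χ'(n+1)(1-ξ(n+1)) + Y(n+1)ξ(n+1) made at step n+1, where
χ'(n+1) = ω(min(X_n, X_{n+1})) is the conductance of the edge just crossed. -/
def obsII (env : ℤ → ℝ) (U ξ Y : ℕ → ℝ) (n : ℕ) : ℝ :=
  env (min (walkII env U n) (walkII env U (n + 1))) * (1 - ξ n) + Y n * ξ n

/-- The set-up of situation ii) (random conductance model with corrupted observations): `ρ` is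
a non-Dirac probability measure on `(D, 1/D)`, the conductances are i.i.d. `ρ`, the walk
drivers are i.i.d. uniform on `[0,1]`, the error indicators are i.i.d. Bernoulli(`p`), the
error values are i.i.d. `ν` on `(D, 1/D)`, and all these random variables are mutually
independent under `μ`. -/
structure SetupII {Ω : Type} [MeasurableSpace Ω] (μ : Measure Ω)
    (D : ℝ) (ρ ν : Measure ℝ) (p : ℝ)
    (env : Ω → ℤ → ℝ) (U ξ Y : Ω → ℕ → ℝ) : Prop where
  probμ : IsProbabilityMeasure μ
  probρ : IsProbabilityMeasure ρ
  probν : IsProbabilityMeasure ν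
  suppρ : ρ (Set.Ioo D (1/D)) = 1
  suppν : ν (Set.Ioo D (1/D)) = 1
  nondirac : ∀ x : ℝ, ρ ≠ Measure.dirac x
  meas : ∀ i, Measurable (family env U ξ Y i)
  indep : iIndepFun (family env U ξ Y) μ
  lawEnv : ∀ z, μ.map (fun w => env w z) = ρ
  lawU : ∀ n, μ.map (fun w => U w n) = unif
  lawξ : ∀ n, μ.map (fun w => ξ w n) = bern p
  lawY : ∀ n, μ.map (fun w => Y w n) = ν

-- elementary real-analysis lemmas

lemma sum_split (g : ℕ → ℝ) (n : ℕ) : ∑ k ∈ Finset.range n, g k =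
    (∑ j ∈ Finset.range ((n+1)/2), g (2*j)) + ∑ j ∈ Finset.range (n/2), g (2*j+1) := by
  induction n with
  | zero => simp
  | succ n ih =>
    rw [Finset.sum_range_succ, ih]
    rcases Nat.even_or_odd n with ⟨m, hm⟩ | ⟨m, hm⟩
    · subst hm
      rw [show (m+m+1+1)/2 = m+1 by omega, show (m+m+1)/2 = m by omega,
        show (m+m)/2 = m by omega, Finset.sum_range_succ (fun j => g (2*j)) m,
        show 2*m = m+m by omega]
      ring
    · subst hm
      rw [show (2*m+1+1+1)/2 = m+1 by omega, show (2*m+1+1)/2 = m+1 by omega,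
        show (2*m+1)/2 = m by omega, Finset.sum_range_succ (fun j => g (2*j)) m,
        Finset.sum_range_succ (fun j => g (2*j+1)) m]
      ring

lemma tendsto_ratio {φ : ℕ → ℕ} (hlo : ∀ n, n ≤ 2 * φ n + 1) (hhi : ∀ n, 2 * φ n ≤ n + 1) :
    Tendsto (fun n : ℕ => ((φ n : ℝ)) / n) atTop (𝓝 (1/2)) := by
  refine tendsto_of_tendsto_of_tendsto_of_le_of_le' (g := fun n : ℕ => 1/2 - 1/(n:ℝ))
    (h := fun n : ℕ => 1/2 + 1/(n:ℝ)) ?_ ?_ ?_ ?_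
  · simpa using (tendsto_const_nhds (x := (1/2:ℝ))).sub tendsto_one_div_atTop_nhds_zero_nat
  · simpa using (tendsto_const_nhds (x := (1/2:ℝ))).add tendsto_one_div_atTop_nhds_zero_nat
  · filter_upwards [eventually_ge_atTop 1] with n hn
    have hn' : (0:ℝ) < n := by exact_mod_cast hn
    rw [le_div_iff₀ hn']
    have h1 : (n:ℝ) ≤ 2 * φ n + 1 := by exact_mod_cast hlo n
    have h2 : (1/2 - 1/(n:ℝ)) * n = n/2 - 1 := by field_simp
    linarith
  · filter_upwards [eventually_ge_atTop 1] with n hn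
    have hn' : (0:ℝ) < n := by exact_mod_cast hn
    rw [div_le_iff₀ hn']
    have h1 : 2 * (φ n : ℝ) ≤ n + 1 := by exact_mod_cast hhi n
    have h2 : (1/2 + 1/(n:ℝ)) * n = n/2 + 1 := by field_simp
    linarith

lemma avg_comp {g : ℕ → ℝ} {L c : ℝ}
    (h : Tendsto (fun m : ℕ => (∑ j ∈ Finset.range m, g j) / m) atTop (𝓝 L))
    (φ : ℕ → ℕ) (hφ : Tendsto φ atTop atTop)
    (hc : Tendsto (fun n : ℕ => (φ n : ℝ) / n) atTop (𝓝 c)) :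
    Tendsto (fun n : ℕ => (∑ j ∈ Finset.range (φ n), g j) / n) atTop (𝓝 (c * L)) := by
  have key := hc.mul (h.comp hφ)
  apply key.congr'
  filter_upwards [eventually_ge_atTop 1, hφ.eventually (eventually_ge_atTop 1)] with n hn hφn
  have hn' : (n:ℝ) ≠ 0 := by
    have : (0:ℝ) < n := by exact_mod_cast hn
    linarith
  have hφ' : ((φ n : ℕ):ℝ) ≠ 0 := by
    have : (0:ℝ) < (φ n : ℝ) := by exact_mod_cast hφn
    linarith
  show (φ n : ℝ) / n * ((∑ j ∈ Finset.range (φ n), g j) / (φ n : ℝ))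
      = (∑ j ∈ Finset.range (φ n), g j) / n
  field_simp

lemma ind_eq_indicator {Ω : Type} {P : Prop} {w : Ω} {s : Set Ω} (h : P ↔ w ∈ s) :
    ind P = s.indicator (fun _ => (1:ℝ)) w := by
  by_cases hw : w ∈ s
  · rw [Set.indicator_of_mem hw]; exact if_pos (h.2 hw)
  · rw [Set.indicator_of_notMem hw]; exact if_neg (fun hp => hw (h.1 hp))


section Aux

variable {Ω : Type} [mΩ : MeasurableSpace Ω] {μ : Measure Ω} {D : ℝ} {ρ ν : Measure ℝ} {p : ℝ}
  {env : Ω → ℤ → ℝ} {U ξ Y : Ω → ℕ → ℝ} {β : ℝ}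

/-- success event along a finite set of times -/
def Dset (ξ Y : Ω → ℕ → ℝ) (β : ℝ) (t : Finset ℕ) : Set Ω :=
  ⋂ k ∈ t, ({w | ξ w k = 1} ∩ {w | Y w k = β})

lemma mem_Dset {w : Ω} {t : Finset ℕ} :
    w ∈ Dset ξ Y β t ↔ ∀ k ∈ t, ξ w k = 1 ∧ Y w k = β := by
  simp [Dset]

lemma measξ (h : SetupII μ D ρ ν p env U ξ Y) (k : ℕ) : Measurable (fun w => ξ w k) :=
  h.meas (Sum.inr (Sum.inr (Sum.inl k)))

lemma measY (h : SetupII μ D ρ ν p env U ξ Y) (k : ℕ) : Measurable (fun w => Y w k) :=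
  h.meas (Sum.inr (Sum.inr (Sum.inr k)))

lemma measEnv (h : SetupII μ D ρ ν p env U ξ Y) (z : ℤ) : Measurable (fun w => env w z) :=
  h.meas (Sum.inl z)

lemma measurable_Dset (h : SetupII μ D ρ ν p env U ξ Y) (t : Finset ℕ) :
    MeasurableSet (Dset ξ Y β t) := by
  apply Finset.measurableSet_biInter
  intro k _
  exact ((measξ h k) (measurableSet_singleton 1)).inter ((measY h k) (measurableSet_singleton β))

lemma meas_xi_one (h : SetupII μ D ρ ν p env U ξ Y) (k : ℕ) :
    μ {w | ξ w k = 1} = ENNReal.ofReal p := by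
  have heq : {w | ξ w k = 1} = (fun w => ξ w k) ⁻¹' {1} := rfl
  rw [heq, ← Measure.map_apply (measξ h k) (measurableSet_singleton 1), h.lawξ k]
  simp [bern, Measure.dirac_apply, Set.indicator_apply]

lemma meas_Y_beta (h : SetupII μ D ρ ν p env U ξ Y) (k : ℕ) :
    μ {w | Y w k = β} = ν {β} := by
  have heq : {w | Y w k = β} = (fun w => Y w k) ⁻¹' {β} := rfl
  rw [heq, ← Measure.map_apply (measY h k) (measurableSet_singleton β), h.lawY k]


lemma meas_Dset (h : SetupII μ D ρ ν p env U ξ Y) (β : ℝ) (t : Finset ℕ) :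
    μ (Dset ξ Y β t) = (ENNReal.ofReal p * ν {β}) ^ t.card := by
  classical
  set ixξ : ℕ → (ℤ ⊕ (ℕ ⊕ (ℕ ⊕ ℕ))) := fun n => Sum.inr (Sum.inr (Sum.inl n)) with hixξ
  set ixY : ℕ → (ℤ ⊕ (ℕ ⊕ (ℕ ⊕ ℕ))) := fun n => Sum.inr (Sum.inr (Sum.inr n)) with hixY
  set sets : (ℤ ⊕ (ℕ ⊕ (ℕ ⊕ ℕ))) → Set ℝ := fun i => match i with
    | Sum.inr (Sum.inr (Sum.inl _)) => {1}
    | Sum.inr (Sum.inr (Sum.inr _)) => ({β} : Set ℝ)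
    | _ => Set.univ
    with hsets
  have hmeas_sets : ∀ i ∈ (t.image ixξ ∪ t.image ixY), MeasurableSet (sets i) := by
    intro i _
    rcases i with z | (n | (n | n)) <;> simp [hsets]
  have key := h.indep.measure_inter_preimage_eq_mul (t.image ixξ ∪ t.image ixY) hmeas_sets
  have hinj₁ : Function.Injective ixξ := by
    intro a b hab; simpa [hixξ] using hab
  have hinj₂ : Function.Injective ixY := by
    intro a b hab; simpa [hixY] using hab
  have hdisj : Disjoint (t.image ixξ) (t.image ixY) := by
    rw [Finset.disjoint_left]
    rintro i hi₁ hi₂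
    simp only [Finset.mem_image] at hi₁ hi₂
    obtain ⟨a, -, rfl⟩ := hi₁
    obtain ⟨b, -, hb⟩ := hi₂
    simp [hixξ, hixY] at hb
  have hset : (⋂ i ∈ (t.image ixξ ∪ t.image ixY), family env U ξ Y i ⁻¹' sets i)
      = Dset ξ Y β t := by
    ext w
    simp only [Set.mem_iInter, Finset.mem_union, Finset.mem_image, mem_Dset]
    constructor
    · intro hw k hk
      refine ⟨?_, ?_⟩
      · exact hw (ixξ k) (Or.inl ⟨k, hk, rfl⟩)
      · exact hw (ixY k) (Or.inr ⟨k, hk, rfl⟩)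
    · rintro hw i (⟨k, hk, rfl⟩ | ⟨k, hk, rfl⟩)
      · exact (hw k hk).1
      · exact (hw k hk).2
  have e1 : ∀ k ∈ t, μ (family env U ξ Y (ixξ k) ⁻¹' sets (ixξ k)) = ENNReal.ofReal p := by
    intro k _
    have : family env U ξ Y (ixξ k) ⁻¹' sets (ixξ k) = {w | ξ w k = 1} := rfl
    rw [this, meas_xi_one h k]
  have e2 : ∀ k ∈ t, μ (family env U ξ Y (ixY k) ⁻¹' sets (ixY k)) = ν {β} := by
    intro k _
    have : family env U ξ Y (ixY k) ⁻¹' sets (ixY k) = {w | Y w k = β} := rfl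
    rw [this, meas_Y_beta h k]
  rw [← hset, key, Finset.prod_union hdisj,
    Finset.prod_image (fun a _ b _ hab => hinj₁ hab),
    Finset.prod_image (fun a _ b _ hab => hinj₂ hab),
    Finset.prod_congr rfl e1, Finset.prod_congr rfl e2,
    Finset.prod_const, Finset.prod_const, mul_pow]

lemma indep_Dset (h : SetupII μ D ρ ν p env U ξ Y) (T : ℕ → Finset ℕ)
    (hT : ∀ i j, i ≠ j → Disjoint (T i) (T j)) :
    iIndepSet (fun j => Dset ξ Y β (T j)) μ := by
  classical
  rw [iIndepSet_iff_meas_biInter (fun j => measurable_Dset h (T j))]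
  intro s
  have hbi : ⋂ j ∈ s, Dset ξ Y β (T j) = Dset ξ Y β (s.biUnion T) := by
    ext w
    simp only [Set.mem_iInter, mem_Dset, Finset.mem_biUnion]
    constructor
    · rintro hw k ⟨j, hj, hk⟩
      exact hw j hj k hk
    · intro hw j hj k hk
      exact hw k ⟨j, hj, hk⟩
  rw [hbi, meas_Dset h, Finset.card_biUnion (fun i _ j _ hij => hT i j hij)]
  simp_rw [meas_Dset h]
  rw [Finset.prod_pow_eq_pow_sum]


lemma map_indicator_bern {E : Set Ω} (hE : MeasurableSet E) [IsProbabilityMeasure μ] :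
    μ.map (E.indicator (fun _ => (1:ℝ))) = bern (μ E).toReal := by
  have hf : Measurable (E.indicator (fun _ => (1:ℝ))) := measurable_const.indicator hE
  have hr0 : (0:ℝ) ≤ (μ E).toReal := ENNReal.toReal_nonneg
  have hr1 : (μ E).toReal ≤ 1 := by
    have h1 : μ E ≤ 1 := prob_le_one
    calc (μ E).toReal ≤ (1 : ℝ≥0∞).toReal := ENNReal.toReal_mono ENNReal.one_ne_top h1
    _ = 1 := by simp
  ext s hs
  rw [Measure.map_apply hf hs]
  have hbern : bern (μ E).toReal s
      = ENNReal.ofReal (1 - (μ E).toReal) * s.indicator (1 : ℝ → ℝ≥0∞) 0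
        + ENNReal.ofReal ((μ E).toReal) * s.indicator (1 : ℝ → ℝ≥0∞) 1 := by
    simp only [bern, Measure.coe_add, Measure.coe_smul, Pi.add_apply, Pi.smul_apply,
      smul_eq_mul, Measure.dirac_apply]
  rw [hbern]
  by_cases h0 : (0:ℝ) ∈ s <;> by_cases h1 : (1:ℝ) ∈ s
  · have hpre : (E.indicator (fun _ => (1:ℝ))) ⁻¹' s = Set.univ := by
      ext w
      by_cases hw : w ∈ E <;> simp [Set.indicator_apply, hw, h0, h1]
    rw [hpre, Set.indicator_of_mem h0, Set.indicator_of_mem h1]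
    simp only [measure_univ, Pi.one_apply, mul_one]
    rw [← ENNReal.ofReal_add (by linarith) hr0]
    norm_num
  · have hpre : (E.indicator (fun _ => (1:ℝ))) ⁻¹' s = Eᶜ := by
      ext w
      by_cases hw : w ∈ E <;> simp [Set.indicator_apply, hw, h0, h1]
    rw [hpre, Set.indicator_of_mem h0, Set.indicator_of_notMem h1, prob_compl_eq_one_sub hE]
    rw [ENNReal.ofReal_sub _ hr0, ENNReal.ofReal_toReal (measure_ne_top μ E)]
    simp
  · have hpre : (E.indicator (fun _ => (1:ℝ))) ⁻¹' s = E := by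
      ext w
      by_cases hw : w ∈ E <;> simp [Set.indicator_apply, hw, h0, h1]
    rw [hpre, Set.indicator_of_notMem h0, Set.indicator_of_mem h1,
      ENNReal.ofReal_toReal (measure_ne_top μ E)]
    simp
  · have hpre : (E.indicator (fun _ => (1:ℝ))) ⁻¹' s = ∅ := by
      ext w
      by_cases hw : w ∈ E <;> simp [Set.indicator_apply, hw, h0, h1]
    rw [hpre, Set.indicator_of_notMem h0, Set.indicator_of_notMem h1]
    simp

lemma slln_Dset (h : SetupII μ D ρ ν p env U ξ Y) (hp0 : 0 ≤ p) (T : ℕ → Finset ℕ)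
    (hT : ∀ i j, i ≠ j → Disjoint (T i) (T j)) (c : ℕ) (hc : ∀ j, (T j).card = c) :
    ∀ᵐ w ∂μ, Tendsto
      (fun n : ℕ => (∑ k ∈ Finset.range n, (Dset ξ Y β (T k)).indicator (fun _ => (1:ℝ)) w) / n)
      atTop (𝓝 ((p * (ν {β}).toReal) ^ c)) := by
  haveI := h.probμ
  haveI := h.probν
  set X : ℕ → Ω → ℝ := fun k => (Dset ξ Y β (T k)).indicator (fun _ => (1:ℝ)) with hX
  have hXmeas : ∀ k, Measurable (X k) := fun k => measurable_const.indicator (measurable_Dset h _)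
  have hindf : iIndepFun X μ :=
    (indep_Dset h T hT).iIndepFun_indicator
  have htoReal : ∀ k : ℕ, ((μ (Dset ξ Y β (T k))).toReal) = (p * (ν {β}).toReal) ^ c := by
    intro k
    rw [meas_Dset h, hc k, ENNReal.toReal_pow, ENNReal.toReal_mul, ENNReal.toReal_ofReal hp0]
  have hlaw : ∀ k, μ.map (X k) = bern ((p * (ν {β}).toReal) ^ c) := by
    intro k
    rw [hX]
    rw [map_indicator_bern (measurable_Dset h _), htoReal k]
  have hident : ∀ i, IdentDistrib (X i) (X 0) μ μ := fun i =>
    ⟨(hXmeas i).aemeasurable, (hXmeas 0).aemeasurable, by rw [hlaw i, hlaw 0]⟩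
  have hint : Integrable (X 0) μ := (integrable_const 1).indicator (measurable_Dset h _)
  have hpair : Pairwise (Function.onFun (IndepFun · · μ) X) := fun i j hij => hindf.indepFun hij
  have hEX : μ[X 0] = (p * (ν {β}).toReal) ^ c := by
    rw [hX]
    rw [integral_indicator_const (1:ℝ) (measurable_Dset h _)]
    rw [smul_eq_mul, mul_one, measureReal_def, htoReal 0]
  have := strong_law_ae_real X hint hpair hident
  rw [hEX] at this
  exact this


lemma good_event (h : SetupII μ D ρ ν p env U ξ Y) (hβρ : ρ {β} = 0) :
    ∀ᵐ w ∂μ, (∀ n, ξ w n = 0 ∨ ξ w n = 1) ∧ (∀ z, env w z ≠ β) := by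
  rw [eventually_and]
  constructor
  · rw [ae_all_iff]
    intro n
    rw [ae_iff]
    have heq : {w | ¬ (ξ w n = 0 ∨ ξ w n = 1)} = (fun w => ξ w n) ⁻¹' ({0,1} : Set ℝ)ᶜ := by
      ext w; simp [not_or]
    have hset : MeasurableSet (({0,1} : Set ℝ)ᶜ) :=
      ((measurableSet_singleton (1:ℝ)).insert 0).compl
    rw [heq, ← Measure.map_apply (measξ h n) hset, h.lawξ n]
    simp [bern, Measure.dirac_apply, Set.indicator_apply]
  · rw [ae_all_iff]
    intro z
    rw [ae_iff]
    have heq : {w | ¬ env w z ≠ β} = (fun w => env w z) ⁻¹' {β} := by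
      ext w; simp
    rw [heq, ← Measure.map_apply (measEnv h z) (measurableSet_singleton β), h.lawEnv z, hβρ]

end Aux

/-- In situation ii), for an atom β of ν which is not an atom of ρ, the asymptotic relative
frequencies of observing β, and of observing a "double β", in χ, exist almost surely and equal
p·ν({β}) and p²·ν({β})² respectively; in particular the conditioned empirical frequency
h(β|β), i.e. their ratio, equals p·ν({β}), which coincides with the unconditioned frequency
h(β) = p·ν({β}). -/
theorem freq_error_atom_sitII
    (D : ℝ) (hD : D ∈ Set.Ioo (0:ℝ) 1)
    {Ω : Type} [mΩ : MeasurableSpace Ω] (μ : Measure Ω)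
    (ρ ν : Measure ℝ) (p : ℝ) (hp : p ∈ Set.Ioo (0:ℝ) 1)
    (env : Ω → ℤ → ℝ) (U ξ Y : Ω → ℕ → ℝ)
    (hsetup : SetupII μ D ρ ν p env U ξ Y)
    (β : ℝ) (hβν : ν {β} ≠ 0) (hβρ : ρ {β} = 0) :
    (∀ᵐ w ∂μ,
      Tendsto
        (fun n : ℕ => (1 / (n : ℝ)) * ∑ k ∈ Finset.range n,
          ind (obsII (env w) (U w) (ξ w) (Y w) k = β))
        atTop (nhds (p * (ν {β}).toReal)) ∧
      Tendsto
        (fun n : ℕ => (1 / (n : ℝ)) * ∑ k ∈ Finset.range n,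
          ind (obsII (env w) (U w) (ξ w) (Y w) k = β ∧
               obsII (env w) (U w) (ξ w) (Y w) (k + 1) = β))
        atTop (nhds (p ^ 2 * ((ν {β}).toReal) ^ 2))) ∧
    (p ^ 2 * ((ν {β}).toReal) ^ 2) / (p * (ν {β}).toReal) = p * (ν {β}).toReal := by
  haveI := hsetup.probμ
  haveI := hsetup.probν
  have hp0 : p ≠ 0 := ne_of_gt hp.1
  have hνβ : (ν {β}).toReal ≠ 0 :=
    ENNReal.toReal_ne_zero.mpr ⟨hβν, measure_ne_top ν _⟩
  constructor
  · -- the almost sure limits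
    have hT1 : ∀ i j : ℕ, i ≠ j → Disjoint ({i} : Finset ℕ) {j} :=
      fun i j hij => Finset.disjoint_singleton.mpr hij
    have h1 := slln_Dset (β := β) hsetup hp.1.le (fun k => {k}) hT1 1 (fun j => rfl)
    have hTA : ∀ i j : ℕ, i ≠ j →
        Disjoint ({2*i, 2*i+1} : Finset ℕ) ({2*j, 2*j+1} : Finset ℕ) := by
      intro i j hij
      rw [Finset.disjoint_left]
      intro a ha hb
      simp only [Finset.mem_insert, Finset.mem_singleton] at ha hb
      omega
    have hcA : ∀ j : ℕ, ({2*j, 2*j+1} : Finset ℕ).card = 2 := by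
      intro j
      rw [Finset.card_insert_of_notMem (by simp), Finset.card_singleton]
    have hA := slln_Dset (β := β) hsetup hp.1.le (fun j => {2*j, 2*j+1}) hTA 2 hcA
    have hTB : ∀ i j : ℕ, i ≠ j →
        Disjoint ({2*i+1, 2*i+1+1} : Finset ℕ) ({2*j+1, 2*j+1+1} : Finset ℕ) := by
      intro i j hij
      rw [Finset.disjoint_left]
      intro a ha hb
      simp only [Finset.mem_insert, Finset.mem_singleton] at ha hb
      omega
    have hcB : ∀ j : ℕ, ({2*j+1, 2*j+1+1} : Finset ℕ).card = 2 := by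
      intro j
      rw [Finset.card_insert_of_notMem (by simp), Finset.card_singleton]
    have hB := slln_Dset (β := β) hsetup hp.1.le (fun j => {2*j+1, 2*j+1+1}) hTB 2 hcB
    filter_upwards [h1, hA, hB, good_event hsetup hβρ] with w hw1 hwA hwB hwg
    obtain ⟨hwξ, hwe⟩ := hwg
    have hobs : ∀ k, (obsII (env w) (U w) (ξ w) (Y w) k = β) ↔ (ξ w k = 1 ∧ Y w k = β) := by
      intro k
      rcases hwξ k with h0 | h1'
      · simp only [obsII, h0, sub_zero, mul_one, mul_zero, add_zero]
        constructor
        · intro hh; exact absurd hh (hwe _)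
        · rintro ⟨h1', -⟩; norm_num at h1'
      · simp only [obsII, h1', sub_self, mul_zero, zero_add, mul_one]
        simp [h1']
    have hmem1 : ∀ k, (obsII (env w) (U w) (ξ w) (Y w) k = β) ↔ w ∈ Dset ξ Y β {k} := by
      intro k
      rw [hobs k, mem_Dset]
      simp
    have hmem2 : ∀ k, ((obsII (env w) (U w) (ξ w) (Y w) k = β ∧
        obsII (env w) (U w) (ξ w) (Y w) (k+1) = β)) ↔ w ∈ Dset ξ Y β {k, k+1} := by
      intro k
      rw [hobs k, hobs (k+1), mem_Dset]
      constructor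
      · rintro ⟨ha, hb⟩ m hm
        rcases Finset.mem_insert.mp hm with rfl | hm
        · exact ha
        · rw [Finset.mem_singleton.mp hm]; exact hb
      · intro hh
        exact ⟨hh k (Finset.mem_insert_self _ _),
          hh (k+1) (Finset.mem_insert_of_mem (Finset.mem_singleton_self _))⟩
    constructor
    · rw [pow_one] at hw1
      apply hw1.congr
      intro n
      rw [one_div, inv_mul_eq_div]
      congr 1
      apply Finset.sum_congr rfl
      intro k _
      exact (ind_eq_indicator (hmem1 k)).symm
    · set g : ℕ → ℝ := fun k => (Dset ξ Y β ({k, k+1} : Finset ℕ)).indicator (fun _ => (1:ℝ)) w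
        with hg
      have hsplit : ∀ n : ℕ, (1/(n:ℝ)) * ∑ k ∈ Finset.range n,
          ind (obsII (env w) (U w) (ξ w) (Y w) k = β ∧
            obsII (env w) (U w) (ξ w) (Y w) (k + 1) = β)
          = (∑ j ∈ Finset.range ((n+1)/2), g (2*j)) / n
            + (∑ j ∈ Finset.range (n/2), g (2*j+1)) / n := by
        intro n
        rw [one_div, inv_mul_eq_div, ← add_div]
        congr 1
        rw [← sum_split g n]
        apply Finset.sum_congr rfl
        intro k _
        exact ind_eq_indicator (hmem2 k)
      have hφA : Tendsto (fun n : ℕ => (n+1)/2) atTop atTop :=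
        tendsto_atTop_atTop.mpr (fun b => ⟨2*b, fun n hn => by omega⟩)
      have hφB : Tendsto (fun n : ℕ => n/2) atTop atTop :=
        tendsto_atTop_atTop.mpr (fun b => ⟨2*b+1, fun n hn => by omega⟩)
      have hcA' : Tendsto (fun n : ℕ => (((n+1)/2 : ℕ) : ℝ) / n) atTop (nhds (1/2)) :=
        tendsto_ratio (fun n => by omega) (fun n => by omega)
      have hcB' : Tendsto (fun n : ℕ => ((n/2 : ℕ) : ℝ) / n) atTop (nhds (1/2)) :=
        tendsto_ratio (fun n => by omega) (fun n => by omega)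
      have htA := avg_comp (g := fun j => g (2*j)) hwA _ hφA hcA'
      have htB := avg_comp (g := fun j => g (2*j+1)) hwB _ hφB hcB'
      have hsum := htA.add htB
      have hval : (1/2) * (p * (ν {β}).toReal)^2 + (1/2) * (p * (ν {β}).toReal)^2
          = p^2 * ((ν {β}).toReal)^2 := by ring
      rw [hval] at hsum
      exact Tendsto.congr (fun n => (hsplit n).symm) hsum
  · have h : p * (ν {β}).toReal ≠ 0 := mul_ne_zero hp0 hνβ
    rw [div_eq_iff h]
    ring
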